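/- arXiv:1510.06895 — 2 statements merged into one kernel-verified Lean document; each statement's English description precedes it below -/
import Mathlib

section
/- Let A₁, …, Aₘ be matrices with Aᵢ ∈ ℝ^{d × nᵢ}, b ∈ ℝ^d, and define f(x₁,…,xₘ) = (1/2)‖Σᵢ Aᵢxᵢ - b‖². Then for all x = (x₁,…,xₘ) and y = (y₁,…,yₘ): |f(x) - f(y) - Σᵢ ⟨∇ᵢf(y), xᵢ - yᵢ⟩| ≤ Σᵢ (m‖Aᵢ‖₂²/2)‖xᵢ - yᵢ‖², where ‖Aᵢ‖₂ is the spectral norm and ∇ᵢf denotes the partial gradient with respect to xᵢ. -/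
/-! The function is `½‖·‖²` composed with the affine map `x ↦ Σᵢ Aᵢxᵢ - b`, so its first-order
Taylor remainder is exactly `½‖Σᵢ Aᵢ(xᵢ - yᵢ)‖²`: nonnegative, and at most
`½ (Σᵢ ‖Aᵢ‖‖xᵢ - yᵢ‖)² ≤ (m/2) Σᵢ ‖Aᵢ‖²‖xᵢ - yᵢ‖²` by the triangle inequality and Cauchy–Schwarz. -/

open RealInnerProductSpace Finset

theorem half_norm_add_sq_sub_half_norm_sq_sub_inner {F : Type*} [NormedAddCommGroup F]
    [InnerProductSpace ℝ F] (w h : F) :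
    1 / 2 * ‖w + h‖ ^ 2 - 1 / 2 * ‖w‖ ^ 2 - ⟪w, h⟫ = 1 / 2 * ‖h‖ ^ 2 := by
  rw [norm_add_sq_real]
  ring

section Blocks

variable {ι : Type*} [Fintype ι] {E : ι → Type*} {F : Type*}

theorem sum_inner_adjoint_apply [∀ i, NormedAddCommGroup (E i)]
    [∀ i, InnerProductSpace ℝ (E i)] [∀ i, CompleteSpace (E i)] [NormedAddCommGroup F]
    [InnerProductSpace ℝ F] [CompleteSpace F] (A : ∀ i, E i →L[ℝ] F) (w : F) (h : ∀ i, E i) :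
    ∑ i, ⟪(A i).adjoint w, h i⟫ = ⟪w, ∑ i, A i (h i)⟫ := by
  simp only [inner_sum, ContinuousLinearMap.adjoint_inner_left]

theorem sq_norm_sum_apply_le [∀ i, SeminormedAddCommGroup (E i)] [∀ i, NormedSpace ℝ (E i)]
    [SeminormedAddCommGroup F] [NormedSpace ℝ F] (A : ∀ i, E i →L[ℝ] F) (h : ∀ i, E i) :
    ‖∑ i, A i (h i)‖ ^ 2 ≤ ∑ i, Fintype.card ι * ‖A i‖ ^ 2 * ‖h i‖ ^ 2 :=
  calc ‖∑ i, A i (h i)‖ ^ 2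
      ≤ (∑ i, ‖A i‖ * ‖h i‖) ^ 2 := by
        gcongr
        exact (norm_sum_le _ _).trans (sum_le_sum fun i _ ↦ (A i).le_opNorm (h i))
    _ ≤ Fintype.card ι * ∑ i, (‖A i‖ * ‖h i‖) ^ 2 := sq_sum_le_card_mul_sum_sq
    _ = ∑ i, Fintype.card ι * ‖A i‖ ^ 2 * ‖h i‖ ^ 2 := by
        rw [mul_sum]
        exact sum_congr rfl fun i _ ↦ by ring

end Blocks

/-- The multi-block quadratic `f(x₁,…,xₘ) = (1/2)‖Σᵢ Aᵢxᵢ - b‖²` satisfies the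
multi-block Lipschitz-gradient inequality with constants `Lᵢ = m‖Aᵢ‖²`, where
`∇ᵢf(y) = Aᵢ* (Σⱼ Aⱼyⱼ - b)` is the partial gradient and `‖Aᵢ‖` the operator
(spectral) norm. -/
theorem multiblock_quadratic_lipschitz (m d : ℕ) (n : Fin m → ℕ)
    (A : ∀ i : Fin m, EuclideanSpace ℝ (Fin (n i)) →L[ℝ] EuclideanSpace ℝ (Fin d))
    (b : EuclideanSpace ℝ (Fin d))
    (f : (∀ i : Fin m, EuclideanSpace ℝ (Fin (n i))) → ℝ)
    (hf : ∀ x, f x = (1 / 2) * ‖(∑ i, A i (x i)) - b‖ ^ 2)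
    (x y : ∀ i : Fin m, EuclideanSpace ℝ (Fin (n i))) :
    |f x - f y - ∑ i, ⟪(A i).adjoint ((∑ j, A j (y j)) - b), x i - y i⟫| ≤
      ∑ i, (m * ‖A i‖ ^ 2 / 2) * ‖x i - y i‖ ^ 2 := by
  have hsplit : ∑ i, A i (x i) - b = (∑ j, A j (y j) - b) + ∑ i, A i (x i - y i) := by
    simp only [map_sub, sum_sub_distrib]
    abel
  rw [hf, hf, sum_inner_adjoint_apply, hsplit, half_norm_add_sq_sub_half_norm_sq_sub_inner,
    abs_of_nonneg (by positivity)]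
  calc 1 / 2 * ‖∑ i, A i (x i - y i)‖ ^ 2
      ≤ 1 / 2 * ∑ i, Fintype.card (Fin m) * ‖A i‖ ^ 2 * ‖x i - y i‖ ^ 2 := by
        gcongr
        exact sq_norm_sum_apply_le A (x - y)
    _ = ∑ i, (m * ‖A i‖ ^ 2 / 2) * ‖x i - y i‖ ^ 2 := by
        rw [Fintype.card_fin, mul_sum]
        exact sum_congr rfl fun i _ ↦ by ring
end

section
/- Fix a concave monotonically increasing g: [0,∞) → [0,∞), supergradients wᵢᵏ of g at σᵢ(Xᵏ), μ > L, and f: ℝ^{m×n} → ℝ with L-Lipschitz gradient. If X^{k+1} minimizes the function X ↦ Σᵢ wᵢᵏ σᵢ(X) + (μ/2)‖X - (Xᵏ - (1/μ)∇f(Xᵏ))‖_F², then F(X^{k+1}) ≤ F(Xᵏ) - ((μ - L)/2)‖Xᵏ - X^{k+1}‖_F², where F(X) = Σᵢ g(σᵢ(X)) + f(X). In particular F(Xᵏ) is monotonically nonincreasing along IRNN iterations. -/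
/-!
The supergradient inequality for `g` at `σᵢ(Xᵏ)` bounds `Σᵢ g(σᵢ(X^{k+1}))` by its linearization
`Σᵢ g(σᵢ(Xᵏ)) + Σᵢ wᵢ (σᵢ(X^{k+1}) - σᵢ(Xᵏ))`, and the descent lemma bounds `f(X^{k+1})` by
`f(Xᵏ) + ⟨∇f(Xᵏ), X^{k+1} - Xᵏ⟩ + (L/2)‖X^{k+1} - Xᵏ‖²`. Comparing the proximal objective at its
minimizer `X^{k+1}` with its value at `Xᵏ` (after completing the square) shows that the sum of the
two linear terms is at most `-(μ/2)‖X^{k+1} - Xᵏ‖²`.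
-/

attribute [local instance] Matrix.frobeniusNormedAddCommGroup Matrix.frobeniusNormedSpace

/-- The `i`-th singular value of a real `m × n` matrix: the square root of the `i`-th
eigenvalue of the positive semidefinite Hermitian matrix `X Xᵀ`. -/
noncomputable def sval {m n : ℕ} (X : Matrix (Fin m) (Fin n) ℝ) (i : Fin m) : ℝ :=
  Real.sqrt ((Matrix.isHermitian_mul_conjTranspose_self X).eigenvalues i)

/-- The Frobenius inner product of two matrices. -/
def finner {m n : ℕ} (X Y : Matrix (Fin m) (Fin n) ℝ) : ℝ :=
  ∑ i, ∑ j, X i j * Y i j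

open Set RealInnerProductSpace

theorem le_add_fderiv_add_half_mul_norm_sq {E : Type*} [NormedAddCommGroup E] [NormedSpace ℝ E]
    {f : E → ℝ} {f' : E → E →L[ℝ] ℝ} {L : ℝ} (hf : ∀ x, HasFDerivAt f (f' x) x)
    (hf' : ∀ x y, f' y (y - x) - f' x (y - x) ≤ L * ‖y - x‖ ^ 2) (x y : E) :
    f y ≤ f x + f' x (y - x) + L / 2 * ‖y - x‖ ^ 2 := by
  set h := y - x
  set φ : ℝ → ℝ := fun t => f (x + t • h) - t * f' x h - L / 2 * t ^ 2 * ‖h‖ ^ 2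
  have hline (t : ℝ) : HasDerivAt (fun s : ℝ => x + s • h) h t := by
    simpa using ((hasDerivAt_id t).smul_const h).const_add x
  have hφ (t : ℝ) : HasDerivAt φ (f' (x + t • h) h - f' x h - L * t * ‖h‖ ^ 2) t := by
    have := (((hf _).comp_hasDerivAt t (hline t)).sub ((hasDerivAt_id t).mul_const (f' x h))).sub
      (((hasDerivAt_pow 2 t).const_mul (L / 2)).mul_const (‖h‖ ^ 2))
    exact this.congr_deriv (by push_cast; ring)
  have hφ_nonpos : ∀ t ∈ interior (Icc (0 : ℝ) 1),
      f' (x + t • h) h - f' x h - L * t * ‖h‖ ^ 2 ≤ 0 := by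
    intro t ht
    rw [interior_Icc] at ht
    have hstep := hf' x (x + t • h)
    simp only [add_sub_cancel_left, map_smul, smul_eq_mul, norm_smul, Real.norm_eq_abs,
      abs_of_pos ht.1] at hstep
    have : t * (f' (x + t • h) h - f' x h - L * t * ‖h‖ ^ 2) ≤ t * 0 := by linarith
    exact le_of_mul_le_mul_left this ht.1
  have hanti := antitoneOn_of_hasDerivWithinAt_nonpos (convex_Icc 0 1)
    (fun t _ => (hφ t).continuousAt.continuousWithinAt) (fun t _ => (hφ t).hasDerivWithinAt)
    hφ_nonpos (left_mem_Icc.2 zero_le_one) (right_mem_Icc.2 zero_le_one) zero_le_one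
  simp only [φ, one_smul, zero_smul, add_zero, add_sub_cancel, h] at hanti
  linarith

theorem half_mul_norm_sub_sub_smul_sq {F : Type*} [NormedAddCommGroup F] [InnerProductSpace ℝ F]
    {μ : ℝ} (hμ : μ ≠ 0) (x y v : F) :
    μ / 2 * ‖y - (x - (1 / μ) • v)‖ ^ 2 = μ / 2 * ‖y - x‖ ^ 2 + ⟪v, y - x⟫ + ‖v‖ ^ 2 / (2 * μ) := by
  rw [sub_sub_eq_add_sub, add_sub_right_comm, norm_add_sq_real, inner_smul_right, norm_smul,
    real_inner_comm, Real.norm_eq_abs, mul_pow, sq_abs]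
  field_simp

theorem sval_nonneg {m n : ℕ} (X : Matrix (Fin m) (Fin n) ℝ) (i : Fin m) : 0 ≤ sval X i :=
  Real.sqrt_nonneg _

namespace Matrix

def toFrobeniusLp {ι κ : Type*} [Fintype ι] [Fintype κ] :
    Matrix ι κ ℝ →ₗᵢ[ℝ] PiLp 2 (fun _ : ι => EuclideanSpace ℝ κ) where
  toFun A := WithLp.toLp 2 fun i => WithLp.toLp 2 (A i)
  map_add' _ _ := rfl
  map_smul' _ _ := rfl
  norm_map' _ := rfl

@[simp]
theorem ofLp_toFrobeniusLp {ι κ : Type*} [Fintype ι] [Fintype κ] (A : Matrix ι κ ℝ) (i : ι) :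
    (toFrobeniusLp A).ofLp i = WithLp.toLp 2 (A i) :=
  rfl

end Matrix

section Frobenius

open Matrix (toFrobeniusLp)

variable {m n : ℕ}

theorem finner_eq_inner (A B : Matrix (Fin m) (Fin n) ℝ) :
    finner A B = ⟪toFrobeniusLp A, toFrobeniusLp B⟫ := by
  simp [finner, PiLp.inner_apply, mul_comm]

theorem finner_le_norm_mul_norm (A B : Matrix (Fin m) (Fin n) ℝ) : finner A B ≤ ‖A‖ * ‖B‖ := by
  simpa [finner_eq_inner] using real_inner_le_norm (toFrobeniusLp A) (toFrobeniusLp B)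

@[simp]
theorem finner_zero_right (A : Matrix (Fin m) (Fin n) ℝ) : finner A 0 = 0 := by
  simp [finner]

theorem finner_sub_left (A B C : Matrix (Fin m) (Fin n) ℝ) :
    finner (A - B) C = finner A C - finner B C := by
  simp only [finner_eq_inner, map_sub, inner_sub_left]

theorem finner_sub_sub_le_mul_norm_sq {G : Matrix (Fin m) (Fin n) ℝ → Matrix (Fin m) (Fin n) ℝ}
    {L : ℝ} (hG : ∀ X Y, ‖G X - G Y‖ ≤ L * ‖X - Y‖) (X Y : Matrix (Fin m) (Fin n) ℝ) :
    finner (G Y - G X) (Y - X) ≤ L * ‖Y - X‖ ^ 2 :=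
  calc finner (G Y - G X) (Y - X) ≤ ‖G Y - G X‖ * ‖Y - X‖ := finner_le_norm_mul_norm _ _
    _ ≤ L * ‖Y - X‖ * ‖Y - X‖ := by gcongr; exact hG Y X
    _ = L * ‖Y - X‖ ^ 2 := by ring

theorem half_mul_frobenius_norm_sub_sub_smul_sq {μ : ℝ} (hμ : μ ≠ 0)
    (X Y V : Matrix (Fin m) (Fin n) ℝ) :
    μ / 2 * ‖Y - (X - (1 / μ) • V)‖ ^ 2 =
      μ / 2 * ‖Y - X‖ ^ 2 + finner V (Y - X) + ‖V‖ ^ 2 / (2 * μ) := by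
  rw [finner_eq_inner]
  exact half_mul_norm_sub_sub_smul_sq hμ (toFrobeniusLp X) (toFrobeniusLp Y) (toFrobeniusLp V)

end Frobenius

theorem irnn_descent_general (m n : ℕ)
    (g : ℝ → ℝ)
    (f : Matrix (Fin m) (Fin n) ℝ → ℝ) (G : Matrix (Fin m) (Fin n) ℝ → Matrix (Fin m) (Fin n) ℝ)
    (hG : ∀ X, ∃ D : Matrix (Fin m) (Fin n) ℝ →L[ℝ] ℝ,
      (∀ H, D H = finner (G X) H) ∧ HasFDerivAt f D X)
    (L μ : ℝ) (hL : 0 < L) (hμ : L < μ)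
    (hlip : ∀ X Y, ‖G X - G Y‖ ≤ L * ‖X - Y‖)
    (Xk Xk1 : Matrix (Fin m) (Fin n) ℝ) (w : Fin m → ℝ)
    (hw : ∀ i, ∀ s, 0 ≤ s → g s ≤ g (sval Xk i) + w i * (s - sval Xk i))
    (hmin : ∀ Y : Matrix (Fin m) (Fin n) ℝ,
      (∑ i, w i * sval Xk1 i) + μ / 2 * ‖Xk1 - (Xk - (1 / μ) • G Xk)‖ ^ 2 ≤
        (∑ i, w i * sval Y i) + μ / 2 * ‖Y - (Xk - (1 / μ) • G Xk)‖ ^ 2) :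
    (∑ i, g (sval Xk1 i)) + f Xk1 ≤
      ((∑ i, g (sval Xk i)) + f Xk) - (μ - L) / 2 * ‖Xk - Xk1‖ ^ 2 := by
  have hμ0 : μ ≠ 0 := (hL.trans hμ).ne'
  choose D hD hfD using hG
  have hdescent : f Xk1 ≤ f Xk + finner (G Xk) (Xk1 - Xk) + L / 2 * ‖Xk1 - Xk‖ ^ 2 := by
    rw [← hD]
    refine le_add_fderiv_add_half_mul_norm_sq hfD (fun X Y => ?_) Xk Xk1
    have := finner_sub_sub_le_mul_norm_sq hlip X Y
    rwa [finner_sub_left, ← hD, ← hD] at this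
  have hprox := hmin Xk
  rw [half_mul_frobenius_norm_sub_sub_smul_sq hμ0, half_mul_frobenius_norm_sub_sub_smul_sq hμ0,
    sub_self, norm_zero, finner_zero_right] at hprox
  have hsuper : ∑ i, g (sval Xk1 i) ≤ ∑ i, (g (sval Xk i) + w i * (sval Xk1 i - sval Xk i)) :=
    Finset.sum_le_sum fun i _ => hw i _ (sval_nonneg Xk1 i)
  simp only [mul_sub, Finset.sum_add_distrib, Finset.sum_sub_distrib] at hsuper
  rw [norm_sub_rev Xk]
  linarith

/-- IRNN descent property (single block): if `g` is concave and monotonically increasing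
on `[0,∞)`, `∇f` is `L`-Lipschitz (w.r.t. the Frobenius norm), `μ > L`, the `wᵢ` are
supergradients of `g` at the singular values of `Xᵏ`, and `X^{k+1}` minimizes the
weighted-nuclear-norm proximal subproblem, then
`F(X^{k+1}) ≤ F(Xᵏ) - ((μ-L)/2)‖Xᵏ - X^{k+1}‖_F²` where `F(X) = Σᵢ g(σᵢ(X)) + f(X)`. -/
theorem irnn_descent (m n : ℕ) (hmn : m ≤ n)
    (g : ℝ → ℝ) (hg : ConcaveOn ℝ (Set.Ici 0) g) (hmono : MonotoneOn g (Set.Ici 0))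
    (hg0 : ∀ s, 0 ≤ s → 0 ≤ g s)
    (f : Matrix (Fin m) (Fin n) ℝ → ℝ) (G : Matrix (Fin m) (Fin n) ℝ → Matrix (Fin m) (Fin n) ℝ)
    (hG : ∀ X, ∃ D : Matrix (Fin m) (Fin n) ℝ →L[ℝ] ℝ,
      (∀ H, D H = finner (G X) H) ∧ HasFDerivAt f D X)
    (L μ : ℝ) (hL : 0 < L) (hμ : L < μ)
    (hlip : ∀ X Y, ‖G X - G Y‖ ≤ L * ‖X - Y‖)
    (Xk Xk1 : Matrix (Fin m) (Fin n) ℝ) (w : Fin m → ℝ)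
    (hw : ∀ i, ∀ s, 0 ≤ s → g s ≤ g (sval Xk i) + w i * (s - sval Xk i))
    (hmin : ∀ Y : Matrix (Fin m) (Fin n) ℝ,
      (∑ i, w i * sval Xk1 i) + μ / 2 * ‖Xk1 - (Xk - (1 / μ) • G Xk)‖ ^ 2 ≤
        (∑ i, w i * sval Y i) + μ / 2 * ‖Y - (Xk - (1 / μ) • G Xk)‖ ^ 2) :
    (∑ i, g (sval Xk1 i)) + f Xk1 ≤
      ((∑ i, g (sval Xk i)) + f Xk) - (μ - L) / 2 * ‖Xk - Xk1‖ ^ 2 :=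
  irnn_descent_general m n g f G hG L μ hL hμ hlip Xk Xk1 w hw hmin
end
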